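/- Assume (C,η) is a Prym curve with dim Cliff_η(C) = (1,2) and let L be a line bundle computing the Prym-canonical Clifford dimension. Then no fiber of the morphism φ_L : C → ℙ^1 contains a degree-3 divisor lying in the intersection of the plane curve φ_{L⊗η}(C) ⊂ ℙ^2 with a line; furthermore, φ_{L⊗η} does not identify any pair of points lying in a single fiber of φ_L. Equivalently, V^1_3(L) ∩ V^2_3(L⊗η) = ∅ and V^1_2(L) ∩ V^1_2(L⊗η) = ∅. -/
import Mathlib


/-- Abstract data of a smooth projective curve over `ℂ`. -/
structure Curve where
  Point : Type
  Pic : Type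
  [picGroup : AddCommGroup Pic]
  g : ℕ
  deg : Pic → ℤ
  h0 : Pic → ℕ
  K : Pic
  pt : Point → Pic
  point_nonempty : Nonempty Point
  deg_add : ∀ L M : Pic, deg (L + M) = deg L + deg M
  deg_pt : ∀ p : Point, deg (pt p) = 1
  h0_trivial : h0 0 = 1
  deg_K : deg K = 2 * (g : ℤ) - 2
  riemannRoch : ∀ L : Pic, (h0 L : ℤ) - (h0 (K - L) : ℤ) = deg L + 1 - (g : ℤ)
  h0_of_deg_neg : ∀ L : Pic, deg L < 0 → h0 L = 0
  h0_of_deg_zero : ∀ L : Pic, deg L = 0 → L ≠ 0 → h0 L = 0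
  h0_sub_point : ∀ (L : Pic) (p : Point),
    h0 (L - pt p) = h0 L ∨ (h0 (L - pt p) : ℤ) = (h0 L : ℤ) - 1
  effective_iff : ∀ L : Pic, 1 ≤ h0 L ↔ ∃ D : Multiset Point, L = (D.map pt).sum

attribute [instance] Curve.picGroup

namespace Curve

variable (X : Curve)

def divOf (D : Multiset X.Point) : X.Pic := (D.map X.pt).sum

def h1 (L : X.Pic) : ℕ := X.h0 (X.K - L)

def IsBasePoint (L : X.Pic) (p : X.Point) : Prop :=
  1 ≤ X.h0 L ∧ X.h0 (L - X.pt p) = X.h0 L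

def BasePointFree (L : X.Pic) : Prop :=
  1 ≤ X.h0 L ∧ ∀ p : X.Point, (X.h0 (L - X.pt p) : ℤ) = (X.h0 L : ℤ) - 1

def VeryAmple (L : X.Pic) : Prop :=
  ∀ p q : X.Point, (X.h0 (L - X.pt p - X.pt q) : ℤ) = (X.h0 L : ℤ) - 2

def cliffEta (η L : X.Pic) : ℤ :=
  X.deg L - (X.h0 L : ℤ) - (X.h0 (L + η) : ℤ) + 1

def cliff (L : X.Pic) : ℤ := X.deg L - 2 * (X.h0 L : ℤ) + 2

def Contributes (η L : X.Pic) : Prop :=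
  X.deg L ≤ (X.g : ℤ) - 1 ∧ 1 ≤ X.h0 L ∧ 1 ≤ X.h0 (L + η)

def PrymCliffIs (η : X.Pic) (n : ℤ) : Prop :=
  IsLeast {m : ℤ | ∃ L : X.Pic, X.Contributes η L ∧ X.cliffEta η L = m} n

def ComputesIndex (η L : X.Pic) : Prop :=
  X.Contributes η L ∧ ∀ M : X.Pic, X.Contributes η M → X.cliffEta η L ≤ X.cliffEta η M

def rPair (η L : X.Pic) : ℕ × ℕ := (X.h0 L - 1, X.h0 (L + η) - 1)

def PrymCliffDimIs (η : X.Pic) (d : ℕ × ℕ) : Prop :=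
  (∃ L : X.Pic, X.ComputesIndex η L ∧ X.rPair η L = d) ∧
  ∀ L : X.Pic, X.ComputesIndex η L → toLex d ≤ toLex (X.rPair η L)

def ComputesDim (η L : X.Pic) : Prop :=
  X.ComputesIndex η L ∧ X.PrymCliffDimIs η (X.rPair η L)

def ContributesCliff (L : X.Pic) : Prop := 2 ≤ X.h0 L ∧ 2 ≤ X.h1 L

def CliffIs (n : ℤ) : Prop :=
  IsLeast {m : ℤ | ∃ L : X.Pic, X.ContributesCliff L ∧ X.cliff L = m} n

def GonalityIs (n : ℤ) : Prop :=
  IsLeast {m : ℤ | ∃ L : X.Pic, 2 ≤ X.h0 L ∧ X.deg L = m} n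

def InSecant (M : X.Pic) (e f : ℕ) (D : Multiset X.Point) : Prop :=
  Multiset.card D = e ∧ (X.h0 M : ℤ) - e + f ≤ (X.h0 (M - X.divOf D) : ℤ)

def IsWeierstrass (M : X.Pic) (w : X.Point) : Prop := X.pt w + X.pt w = M

end Curve

namespace Curve

variable (X : Curve)

lemma deg_zero : X.deg 0 = 0 := by
  have h := X.deg_add 0 0
  rw [add_zero] at h
  omega

lemma deg_sub (A B : X.Pic) : X.deg (A - B) = X.deg A - X.deg B := by
  have h := X.deg_add (A - B) B
  rw [sub_add_cancel] at h
  omega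

lemma deg_divOf (D : Multiset X.Point) :
    X.deg (X.divOf D) = Multiset.card D := by
  induction D using Multiset.induction with
  | empty => simp [divOf, X.deg_zero]
  | cons a D ih =>
    simp only [divOf, Multiset.map_cons, Multiset.sum_cons] at *
    rw [X.deg_add, X.deg_pt, ih, Multiset.card_cons]
    push_cast
    ring

end Curve

/-- If `dim Cliff_η(C) = (1, 2)` and `L` computes the Prym-canonical Clifford
dimension then, equivalently to the geometric statement about the morphisms
`φ_L : C → ℙ¹` and `φ_{L⊗η} : C → ℙ²`:
`V¹₃(L) ∩ V²₃(L ⊗ η) = ∅` and `V¹₂(L) ∩ V¹₂(L ⊗ η) = ∅`. -/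
theorem no_trisecant_in_fiber (X : Curve) (η : X.Pic)
    (hg : 2 ≤ X.g) (hη : η ≠ 0) (hη2 : η + η = 0)
    (hdim : X.PrymCliffDimIs η (1, 2))
    (L : X.Pic) (hL : X.ComputesDim η L) :
    (¬ ∃ D : Multiset X.Point,
        X.InSecant L 3 2 D ∧ X.InSecant (L + η) 3 1 D) ∧
    (¬ ∃ D : Multiset X.Point,
        X.InSecant L 2 1 D ∧ X.InSecant (L + η) 2 1 D) := by
  
  obtain ⟨hLidx, hLdim⟩ := hL
  obtain ⟨⟨L0, hL0idx, hL0pair⟩, hmin⟩ := hdim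
  have hle1 : toLex ((1 : ℕ), (2 : ℕ)) ≤ toLex (X.rPair η L) := hmin L hLidx
  have hle2 : toLex (X.rPair η L) ≤ toLex ((1 : ℕ), (2 : ℕ)) := by
    have h := hLdim.2 L0 hL0idx
    rwa [hL0pair] at h
  have hpair : X.rPair η L = (1, 2) := by
    have := le_antisymm hle2 hle1
    exact toLex.injective this
  have hp1 : X.h0 L - 1 = 1 := congrArg Prod.fst hpair
  have hp2 : X.h0 (L + η) - 1 = 2 := congrArg Prod.snd hpair
  have h0L : X.h0 L = 2 := by omega
  have h0Lη : X.h0 (L + η) = 3 := by omega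
  have hdegL : X.deg L ≤ (X.g : ℤ) - 1 := hLidx.1.1
  constructor
  · rintro ⟨D, ⟨hc3, hs1⟩, ⟨-, hs2⟩⟩
    set M := L - X.divOf D with hM
    have hdegM : X.deg M = X.deg L - 3 := by
      rw [hM, X.deg_sub, X.deg_divOf, hc3]; norm_num
    have heqM : L + η - X.divOf D = M + η := by rw [hM]; abel
    rw [heqM] at hs2
    push_cast at hs1 hs2
    have hh1 : 1 ≤ X.h0 M := by omega
    have hh2 : 1 ≤ X.h0 (M + η) := by omega
    have hcon : X.Contributes η M := ⟨by omega, hh1, hh2⟩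
    have hle := hLidx.2 M hcon
    unfold Curve.cliffEta at hle
    have ha : X.h0 M = 1 ∧ X.h0 (M + η) = 1 := by omega
    have heqc : X.cliffEta η M = X.cliffEta η L := by
      unfold Curve.cliffEta; omega
    have hMidx : X.ComputesIndex η M :=
      ⟨hcon, fun N hN => heqc ▸ hLidx.2 N hN⟩
    have hfin := hmin M hMidx
    have hrM : X.rPair η M = (0, 0) := by
      unfold Curve.rPair; rw [ha.1, ha.2]
    rw [hrM] at hfin
    rw [Prod.Lex.le_iff] at hfin
    simp at hfin
  · rintro ⟨D, ⟨hc2, hs1⟩, ⟨-, hs2⟩⟩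
    set M := L - X.divOf D with hM
    have hdegM : X.deg M = X.deg L - 2 := by
      rw [hM, X.deg_sub, X.deg_divOf, hc2]; norm_num
    have heqM : L + η - X.divOf D = M + η := by rw [hM]; abel
    rw [heqM] at hs2
    push_cast at hs1 hs2
    have hh1 : 1 ≤ X.h0 M := by omega
    have hh2 : 1 ≤ X.h0 (M + η) := by omega
    have hcon : X.Contributes η M := ⟨by omega, hh1, hh2⟩
    have hle := hLidx.2 M hcon
    unfold Curve.cliffEta at hle
    have ha : X.h0 M = 1 ∧ X.h0 (M + η) = 2 := by omega
    have heqc : X.cliffEta η M = X.cliffEta η L := by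
      unfold Curve.cliffEta; omega
    have hMidx : X.ComputesIndex η M :=
      ⟨hcon, fun N hN => heqc ▸ hLidx.2 N hN⟩
    have hfin := hmin M hMidx
    have hrM : X.rPair η M = (0, 1) := by
      unfold Curve.rPair; rw [ha.1, ha.2]
    rw [hrM] at hfin
    rw [Prod.Lex.le_iff] at hfin
    simp at hfin
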